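/- arXiv:2102.11325 — 3 statements merged into one kernel-verified Lean document; each statement's English description precedes it below -/
import Mathlib

section
/- Let d > 1, p ∈ (1,∞), s ∈ (0,1), let D ⊆ ℝ^d be a bounded open set, and let ψ: D → ℝ be a bounded Lipschitz (in particular, smooth with all derivatives bounded) function. Then there is a constant c, depending only on d, p, s, D, ‖ψ‖_∞ and the Lipschitz constant of ψ, such that for every vector field u on D, |uψ|_{X^{s,p}(D)} ≤ c ‖u‖_{X^{s,p}(D)}, where uψ denotes the pointwise product x ↦ ψ(x) u(x). -/
/-!
Split `ψ(x)u(x) - ψ(y)u(y) = ψ(y)(u(x) - u(y)) + (ψ(x) - ψ(y))u(x)`. The first part contributes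
at most `M^p` times the projected integrand of `u`. The second is bounded by
`K ‖u(x)‖ ‖x - y‖²`, so after dividing by `‖x - y‖` and integrating in `y` it contributes
`‖u(x)‖^p ∫_{‖z‖ < r} ‖z‖^(p - d - sp) dz`, where `r` bounds the diameter of `D`; this integral
is finite because `p - d - sp > -d`, i.e. `s < 1`.
-/

open MeasureTheory ENNReal NNReal RealInnerProductSpace Filter

noncomputable section

abbrev Euc (d : ℕ) : Type := EuclideanSpace ℝ (Fin d)

/-- `∫_D ‖u‖^p` as an extended nonnegative real. -/
def lpIntP (d : ℕ) (p : ℝ) (D : Set (Euc d)) (u : Euc d → Euc d) : ℝ≥0∞ :=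
  ∫⁻ x in D, (‖u x‖₊ : ℝ≥0∞) ^ p

/-- The `p`-th power of the fractional Sobolev (Gagliardo) seminorm `|u|_{W^{s,p}(D)}`. -/
def wSemiP (d : ℕ) (s p : ℝ) (D : Set (Euc d)) (u : Euc d → Euc d) : ℝ≥0∞ :=
  ∫⁻ x in D, ∫⁻ y in D,
    (‖u x - u y‖₊ : ℝ≥0∞) ^ p / (‖x - y‖₊ : ℝ≥0∞) ^ ((d : ℝ) + s * p)

/-- The `p`-th power of the projected seminorm `|u|_{X^{s,p}(D)}`. -/
def xSemiP (d : ℕ) (s p : ℝ) (D : Set (Euc d)) (u : Euc d → Euc d) : ℝ≥0∞ :=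
  ∫⁻ x in D, ∫⁻ y in D,
    ENNReal.ofReal (|(inner ℝ (u x - u y) (x - y) : ℝ)| / ‖x - y‖) ^ p
      / (‖x - y‖₊ : ℝ≥0∞) ^ ((d : ℝ) + s * p)

/-- The norm `‖u‖_{W^{s,p}(D)}`. -/
def wNorm (d : ℕ) (s p : ℝ) (D : Set (Euc d)) (u : Euc d → Euc d) : ℝ≥0∞ :=
  (lpIntP d p D u + wSemiP d s p D u) ^ (1 / p)

/-- The norm `‖u‖_{X^{s,p}(D)}`. -/
def xNorm (d : ℕ) (s p : ℝ) (D : Set (Euc d)) (u : Euc d → Euc d) : ℝ≥0∞ :=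
  (lpIntP d p D u + xSemiP d s p D u) ^ (1 / p)

/-- The class `(C^1_c(D))^d` of continuously differentiable vector fields compactly
supported in `D` (viewed as functions on all of `ℝ^d`, extended by zero). -/
def C1c (d : ℕ) (D : Set (Euc d)) : Set (Euc d → Euc d) :=
  {u | ContDiff ℝ 1 u ∧ HasCompactSupport u ∧ tsupport u ⊆ D}

/-- `W_0^{s,p}(D)`: the closure of `(C^1_c(D))^d` in the norm `‖·‖_{W^{s,p}(D)}`. -/
def W0 (d : ℕ) (s p : ℝ) (D : Set (Euc d)) : Set (Euc d → Euc d) :=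
  {u | Measurable u ∧ wNorm d s p D u ≠ ⊤ ∧
    ∃ v : ℕ → Euc d → Euc d, (∀ n, v n ∈ C1c d D) ∧
      Tendsto (fun n => wNorm d s p D (v n - u)) atTop (nhds 0)}

/-- `X_0^{s,p}(D)`: the closure of `(C^1_c(D))^d` in the norm `‖·‖_{X^{s,p}(D)}`. -/
def X0 (d : ℕ) (s p : ℝ) (D : Set (Euc d)) : Set (Euc d → Euc d) :=
  {u | Measurable u ∧ xNorm d s p D u ≠ ⊤ ∧
    ∃ v : ℕ → Euc d → Euc d, (∀ n, v n ∈ C1c d D) ∧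
      Tendsto (fun n => xNorm d s p D (v n - u)) atTop (nhds 0)}

/-- The first `d-1` coordinates `x'` of a point `x ∈ ℝ^d`. -/
def proj' (d : ℕ) (x : Euc d) : Euc (d - 1) :=
  WithLp.toLp 2 (fun i => x (Fin.castLE (Nat.sub_le d 1) i))

/-- The epigraph `{(x', x_d) : x_d > f(x')}` of `f : ℝ^{d-1} → ℝ`. -/
def epigraph (d : ℕ) (hd : 0 < d) (f : Euc (d - 1) → ℝ) : Set (Euc d) :=
  {x | f (proj' d x) < x ⟨d - 1, Nat.sub_lt hd Nat.one_pos⟩}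

/-- The upper half-space `ℝ^d_+`. -/
def halfSpace (d : ℕ) (hd : 0 < d) : Set (Euc d) :=
  {x | 0 < x ⟨d - 1, Nat.sub_lt hd Nat.one_pos⟩}

/-- `D` is a Lipschitz open set with constant `L`. -/
def IsLipschitzSet (d : ℕ) (hd : 0 < d) (L : ℝ) (D : Set (Euc d)) : Prop :=
  ∃ (n : ℕ) (z : Fin n → Euc d) (r : Fin n → ℝ)
    (f : Fin n → Euc (d - 1) → ℝ) (R : Fin n → (Euc d ≃ᵢ Euc d)),
    (∀ i, z i ∈ frontier D) ∧ (∀ i, 0 < r i) ∧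
    (∀ i, LipschitzWith (Real.toNNReal L) (f i)) ∧
    frontier D ⊆ ⋃ i, Metric.ball (z i) (r i) ∧
    (∀ i, R i '' (Metric.ball (z i) (r i) ∩ D) ⊆ epigraph d hd (f i)) ∧
    (∀ i, R i '' (Metric.ball (z i) (r i) ∩ frontier D)
        = R i '' Metric.ball (z i) (r i) ∩ frontier (epigraph d hd (f i)))

/-- `D` is a `C^1` open set. -/
def IsC1Set (d : ℕ) (hd : 0 < d) (D : Set (Euc d)) : Prop :=
  ∃ (n : ℕ) (z : Fin n → Euc d) (r : Fin n → ℝ)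
    (f : Fin n → Euc (d - 1) → ℝ) (R : Fin n → (Euc d ≃ᵢ Euc d)),
    (∀ i, z i ∈ frontier D) ∧ (∀ i, 0 < r i) ∧
    (∀ i, ContDiff ℝ 1 (f i)) ∧
    frontier D ⊆ ⋃ i, Metric.ball (z i) (r i) ∧
    (∀ i, R i '' (Metric.ball (z i) (r i) ∩ D) ⊆ epigraph d hd (f i)) ∧
    (∀ i, R i '' (Metric.ball (z i) (r i) ∩ frontier D)
        = R i '' Metric.ball (z i) (r i) ∩ frontier (epigraph d hd (f i)))

/-- The constant `C(L) = √(1 + L(L+1))`. -/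
def CL (L : ℝ) : ℝ := Real.sqrt (1 + L * (L + 1))

/-- The graph-flattening map `T(x', x_d) = (x', x_d - f(x'))`. -/
def flatten (d : ℕ) (f : Euc (d - 1) → ℝ) (x : Euc d) : Euc d :=
  WithLp.toLp 2 (fun i => if (i : ℕ) = d - 1 then x i - f (proj' d x) else x i)

/-- The inverse map `T⁻¹(w', w_d) = (w', w_d + f(w'))`. -/
def shiftGraph (d : ℕ) (f : Euc (d - 1) → ℝ) (w : Euc d) : Euc d :=
  WithLp.toLp 2 (fun i => if (i : ℕ) = d - 1 then w i + f (proj' d w) else w i)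

/-- The `p`-th power of the fractional Sobolev seminorm of a scalar function. -/
def wSemiPScalar (d : ℕ) (s p : ℝ) (D : Set (Euc d)) (g : Euc d → ℝ) : ℝ≥0∞ :=
  ∫⁻ x in D, ∫⁻ y in D,
    (‖g x - g y‖₊ : ℝ≥0∞) ^ p / (‖x - y‖₊ : ℝ≥0∞) ^ ((d : ℝ) + s * p)

/-- `B_δ = {x ∈ B : dist(x, ∂B) > δ}`. -/
def innerSet (d : ℕ) (δ : ℝ) (B : Set (Euc d)) : Set (Euc d) :=
  {x ∈ B | δ < Metric.infDist x (frontier B)}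

open Metric Module

section Kernel

variable {E : Type*} [NormedAddCommGroup E] [NormedSpace ℝ E] [FiniteDimensional ℝ E]
  [MeasurableSpace E] [BorelSpace E] {μ : Measure E} [μ.IsAddHaarMeasure]

lemma lintegral_ball_enorm_rpow_lt_top (hE : 1 ≤ finrank ℝ E) {γ : ℝ}
    (hγ : -(finrank ℝ E : ℝ) < γ) (r : ℝ) :
    ∫⁻ z in ball 0 r, ‖z‖ₑ ^ γ ∂μ < ∞ := by
  have : Nontrivial E := Module.nontrivial_of_finrank_pos (R := ℝ) (by omega)
  have hint : IntegrableOn (fun z : E => ‖z‖ ^ γ) (ball 0 r) μ :=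
    integrableOn_ball_of_norm_le_rpow hE (C := 1) (α := -γ) (by linarith)
      (ae_of_all _ fun z => by simp [abs_of_nonneg (Real.rpow_nonneg (norm_nonneg z) γ)])
      (continuous_norm.measurable.pow_const γ).aestronglyMeasurable
  refine (lintegral_congr_ae ?_).trans_lt hint.hasFiniteIntegral
  filter_upwards [ae_restrict_of_ae (measure_eq_zero_iff_ae_notMem.1 (measure_singleton (μ := μ) 0))]
    with z hz
  have hz : 0 < ‖z‖ := norm_pos_iff.2 hz
  rw [Real.enorm_eq_ofReal (by positivity), ← ENNReal.ofReal_rpow_of_pos hz, ofReal_norm]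

lemma setLIntegral_comp_sub_le_ball {D : Set E} (hD : MeasurableSet D) {x : E} {r : ℝ}
    (hr : ∀ y ∈ D, ‖x - y‖ < r) (g : E → ℝ≥0∞) :
    ∫⁻ y in D, g (x - y) ∂μ ≤ ∫⁻ z in ball 0 r, g z ∂μ :=
  calc ∫⁻ y in D, g (x - y) ∂μ
      ≤ ∫⁻ y in D, (ball 0 r).indicator g (x - y) ∂μ :=
        setLIntegral_mono' hD fun y hy => by
          rw [Set.indicator_of_mem (mem_ball_zero_iff.2 (hr y hy))]
    _ ≤ ∫⁻ y, (ball 0 r).indicator g (x - y) ∂μ := setLIntegral_le_lintegral _ _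
    _ = ∫⁻ z in ball 0 r, g z ∂μ := by
        rw [lintegral_sub_left_eq_self, lintegral_indicator measurableSet_ball]

end Kernel

lemma ENNReal.rpow_div_rpow_le_rpow_sub {x : ℝ≥0∞} (hx : x ≠ ∞) {a : ℝ} (ha : 0 < a) (b : ℝ) :
    x ^ a / x ^ b ≤ x ^ (a - b) := by
  rcases eq_or_ne x 0 with rfl | hx0
  · simp [ENNReal.zero_rpow_of_pos ha]
  · rw [ENNReal.rpow_sub a b hx0 hx]

lemma ENNReal.exists_pos_le_ofReal_rpow {C : ℝ≥0∞} (hC : C ≠ ∞) {p : ℝ} (hp : 0 < p) :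
    ∃ c : ℝ, 0 < c ∧ C ≤ ENNReal.ofReal c ^ p := by
  refine ⟨(C.toReal + 1) ^ (1 / p), by positivity, ?_⟩
  rw [ENNReal.ofReal_rpow_of_nonneg (by positivity) hp.le, ← Real.rpow_mul (by positivity),
    one_div_mul_cancel hp.ne', Real.rpow_one]
  calc C = ENNReal.ofReal C.toReal := (ENNReal.ofReal_toReal hC).symm
    _ ≤ ENNReal.ofReal (C.toReal + 1) := ENNReal.ofReal_le_ofReal (by linarith)

section Pointwise

variable {E : Type*} [NormedAddCommGroup E] [InnerProductSpace ℝ E]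
  {ψ : E → ℝ} {u : E → E} {x y : E} {M : ℝ} {K : ℝ≥0}

lemma abs_inner_smul_sub_smul_div_norm_le (hM : |ψ y| ≤ M)
    (hψ : dist (ψ x) (ψ y) ≤ K * dist x y) :
    |⟪ψ x • u x - ψ y • u y, x - y⟫| / ‖x - y‖
      ≤ M * (|⟪u x - u y, x - y⟫| / ‖x - y‖) + K * ‖u x‖ * ‖x - y‖ := by
  rw [Real.dist_eq, dist_eq_norm] at hψ
  have hsplit : ψ x • u x - ψ y • u y = ψ y • (u x - u y) + (ψ x - ψ y) • u x := by module
  have hnum : |⟪ψ x • u x - ψ y • u y, x - y⟫|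
      ≤ M * |⟪u x - u y, x - y⟫| + K * ‖u x‖ * (‖x - y‖ * ‖x - y‖) := by
    rw [hsplit, inner_add_left, real_inner_smul_left, real_inner_smul_left]
    refine (abs_add_le _ _).trans ?_
    rw [abs_mul, abs_mul]
    refine add_le_add (by gcongr) ?_
    calc |ψ x - ψ y| * |⟪u x, x - y⟫| ≤ (K * ‖x - y‖) * (‖u x‖ * ‖x - y‖) := by
          gcongr
          exact abs_real_inner_le_norm _ _
      _ = K * ‖u x‖ * (‖x - y‖ * ‖x - y‖) := by ring
  calc |⟪ψ x • u x - ψ y • u y, x - y⟫| / ‖x - y‖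
      ≤ (M * |⟪u x - u y, x - y⟫| + K * ‖u x‖ * (‖x - y‖ * ‖x - y‖)) / ‖x - y‖ := by
        gcongr
    _ = M * (|⟪u x - u y, x - y⟫| / ‖x - y‖) + K * ‖u x‖ * ‖x - y‖ := by
        rw [add_div, mul_div_assoc, mul_div_assoc, mul_self_div_self]

lemma ofReal_abs_inner_smul_sub_smul_div_norm_rpow_le {p : ℝ} (hp : 1 ≤ p) (hM : |ψ y| ≤ M)
    (hψ : dist (ψ x) (ψ y) ≤ K * dist x y) :
    ENNReal.ofReal (|⟪ψ x • u x - ψ y • u y, x - y⟫| / ‖x - y‖) ^ p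
      ≤ 2 ^ (p - 1) * (ENNReal.ofReal M ^ p * ENNReal.ofReal (|⟪u x - u y, x - y⟫| / ‖x - y‖) ^ p
        + (K : ℝ≥0∞) ^ p * ‖u x‖ₑ ^ p * ‖x - y‖ₑ ^ p) := by
  have hM0 : 0 ≤ M := (abs_nonneg _).trans hM
  have hp0 : 0 ≤ p := by linarith
  calc ENNReal.ofReal (|⟪ψ x • u x - ψ y • u y, x - y⟫| / ‖x - y‖) ^ p
      ≤ (ENNReal.ofReal (M * (|⟪u x - u y, x - y⟫| / ‖x - y‖))
          + ENNReal.ofReal (K * ‖u x‖ * ‖x - y‖)) ^ p := by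
        gcongr
        exact (ENNReal.ofReal_le_ofReal (abs_inner_smul_sub_smul_div_norm_le hM hψ)).trans
          ENNReal.ofReal_add_le
    _ ≤ 2 ^ (p - 1) * (ENNReal.ofReal (M * (|⟪u x - u y, x - y⟫| / ‖x - y‖)) ^ p
          + ENNReal.ofReal (K * ‖u x‖ * ‖x - y‖) ^ p) :=
        ENNReal.rpow_add_le_mul_rpow_add_rpow _ _ hp
    _ = _ := by
        rw [ENNReal.ofReal_mul hM0, ENNReal.ofReal_mul (by positivity),
          ENNReal.ofReal_mul K.coe_nonneg, ENNReal.ofReal_coe_nnreal, ofReal_norm, ofReal_norm,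
          ENNReal.mul_rpow_of_nonneg _ _ hp0, ENNReal.mul_rpow_of_nonneg _ _ hp0,
          ENNReal.mul_rpow_of_nonneg _ _ hp0]

end Pointwise

section InnerIntegral

variable {E : Type*} [NormedAddCommGroup E] [InnerProductSpace ℝ E] [FiniteDimensional ℝ E]
  [MeasurableSpace E] [BorelSpace E] {μ : Measure E} [μ.IsAddHaarMeasure]

lemma setLIntegral_ofReal_abs_inner_smul_sub_smul_le {D : Set E} (hD : MeasurableSet D)
    {ψ : E → ℝ} {u : E → E} {x : E} {M r p q : ℝ} {K : ℝ≥0} (hp : 1 ≤ p)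
    (hM : ∀ y ∈ D, |ψ y| ≤ M) (hψ : ∀ y ∈ D, dist (ψ x) (ψ y) ≤ K * dist x y)
    (hr : ∀ y ∈ D, ‖x - y‖ < r) :
    ∫⁻ y in D, ENNReal.ofReal (|⟪ψ x • u x - ψ y • u y, x - y⟫| / ‖x - y‖) ^ p
        / ‖x - y‖ₑ ^ q ∂μ
      ≤ 2 ^ (p - 1) * (ENNReal.ofReal M ^ p * ∫⁻ y in D,
          ENNReal.ofReal (|⟪u x - u y, x - y⟫| / ‖x - y‖) ^ p / ‖x - y‖ₑ ^ q ∂μ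
        + (K : ℝ≥0∞) ^ p * ‖u x‖ₑ ^ p * ∫⁻ z in ball 0 r, ‖z‖ₑ ^ p / ‖z‖ₑ ^ q ∂μ) := by
  calc ∫⁻ y in D, ENNReal.ofReal (|⟪ψ x • u x - ψ y • u y, x - y⟫| / ‖x - y‖) ^ p
        / ‖x - y‖ₑ ^ q ∂μ
      ≤ ∫⁻ y in D, 2 ^ (p - 1) * (ENNReal.ofReal M ^ p
          * (ENNReal.ofReal (|⟪u x - u y, x - y⟫| / ‖x - y‖) ^ p / ‖x - y‖ₑ ^ q)
          + (K : ℝ≥0∞) ^ p * ‖u x‖ₑ ^ p * (‖x - y‖ₑ ^ p / ‖x - y‖ₑ ^ q)) ∂μ := by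
        refine setLIntegral_mono' hD fun y hy => ?_
        rw [← mul_div_assoc, ← mul_div_assoc, ← ENNReal.add_div, ← mul_div_assoc]
        gcongr
        exact ofReal_abs_inner_smul_sub_smul_div_norm_rpow_le hp (hM y hy) (hψ y hy)
    _ = 2 ^ (p - 1) * (ENNReal.ofReal M ^ p * ∫⁻ y in D,
          ENNReal.ofReal (|⟪u x - u y, x - y⟫| / ‖x - y‖) ^ p / ‖x - y‖ₑ ^ q ∂μ
        + (K : ℝ≥0∞) ^ p * ‖u x‖ₑ ^ p * ∫⁻ y in D, ‖x - y‖ₑ ^ p / ‖x - y‖ₑ ^ q ∂μ) := by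
        rw [lintegral_const_mul' _ _ (by finiteness), lintegral_add_right' _ (by fun_prop),
          lintegral_const_mul' _ _ (by finiteness), lintegral_const_mul _ (by fun_prop)]
    _ ≤ _ := by
        gcongr 2 ^ (p - 1) * (_ + _ * ?_)
        exact setLIntegral_comp_sub_le_ball hD hr fun z => ‖z‖ₑ ^ p / ‖z‖ₑ ^ q

end InnerIntegral

lemma xSemiP_smul_le {d : ℕ} {s p M r : ℝ} {K : ℝ≥0} (hp : 1 ≤ p) {D : Set (Euc d)}
    (hD : MeasurableSet D) (hDr : ∀ x ∈ D, ∀ y ∈ D, ‖x - y‖ < r) {ψ : Euc d → ℝ}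
    {u : Euc d → Euc d} (hψ : LipschitzOnWith K ψ D) (hM : ∀ x ∈ D, |ψ x| ≤ M)
    (hu : Measurable u) :
    xSemiP d s p D (fun x => ψ x • u x)
      ≤ 2 ^ (p - 1) * (ENNReal.ofReal M ^ p * xSemiP d s p D u
        + (K : ℝ≥0∞) ^ p * lpIntP d p D u
          * ∫⁻ z in ball (0 : Euc d) r, ‖z‖ₑ ^ p / ‖z‖ₑ ^ ((d : ℝ) + s * p)) := by
  simp only [xSemiP, lpIntP, ← enorm_eq_nnnorm]
  calc _ ≤ ∫⁻ x in D, 2 ^ (p - 1) * (ENNReal.ofReal M ^ p * (∫⁻ y in D,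
          ENNReal.ofReal (|⟪u x - u y, x - y⟫| / ‖x - y‖) ^ p / ‖x - y‖ₑ ^ ((d : ℝ) + s * p))
        + (K : ℝ≥0∞) ^ p * ‖u x‖ₑ ^ p
          * ∫⁻ z in ball (0 : Euc d) r, ‖z‖ₑ ^ p / ‖z‖ₑ ^ ((d : ℝ) + s * p)) :=
        setLIntegral_mono' hD fun x hx => setLIntegral_ofReal_abs_inner_smul_sub_smul_le hD hp hM
          (fun y hy => hψ.dist_le_mul x hx y hy) (hDr x hx)
    _ = _ := by
        rw [lintegral_const_mul' _ _ (by finiteness), lintegral_add_right' _ (by fun_prop),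
          lintegral_const_mul' _ _ (by finiteness), lintegral_mul_const _ (by fun_prop),
          lintegral_const_mul _ (by fun_prop)]

lemma xSemiP_smul_le_mul_add {d : ℕ} {s p M r : ℝ} {K : ℝ≥0} (hp : 1 ≤ p) {D : Set (Euc d)}
    (hD : MeasurableSet D) (hDr : ∀ x ∈ D, ∀ y ∈ D, ‖x - y‖ < r) {ψ : Euc d → ℝ}
    {u : Euc d → Euc d} (hψ : LipschitzOnWith K ψ D) (hM : ∀ x ∈ D, |ψ x| ≤ M)
    (hu : Measurable u) :
    xSemiP d s p D (fun x => ψ x • u x)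
      ≤ 2 ^ (p - 1) * (ENNReal.ofReal M ^ p + (K : ℝ≥0∞) ^ p
          * ∫⁻ z in ball (0 : Euc d) r, ‖z‖ₑ ^ p / ‖z‖ₑ ^ ((d : ℝ) + s * p))
        * (lpIntP d p D u + xSemiP d s p D u) := by
  set I := ∫⁻ z in ball (0 : Euc d) r, ‖z‖ₑ ^ p / ‖z‖ₑ ^ ((d : ℝ) + s * p)
  set A := ENNReal.ofReal M ^ p
  set B := (K : ℝ≥0∞) ^ p
  calc xSemiP d s p D (fun x => ψ x • u x)
      ≤ 2 ^ (p - 1) * (A * xSemiP d s p D u + B * lpIntP d p D u * I) :=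
        xSemiP_smul_le hp hD hDr hψ hM hu
    _ ≤ 2 ^ (p - 1) * ((A + B * I) * xSemiP d s p D u + (A + B * I) * lpIntP d p D u) := by
        rw [mul_right_comm B]
        gcongr
        · exact le_self_add
        · exact le_add_self
    _ = _ := by ring

theorem stmt8_general (d : ℕ) (hd : 1 < d) (p s : ℝ) (hp : 1 < p) (hs1 : s < 1)
    (D : Set (Euc d)) (hD : IsOpen D) (hDb : Bornology.IsBounded D) (M : ℝ) (K : ℝ≥0) :
    ∃ c : ℝ, 0 < c ∧ ∀ (ψ : Euc d → ℝ) (u : Euc d → Euc d),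
      LipschitzOnWith K ψ D → (∀ x ∈ D, |ψ x| ≤ M) → Measurable u →
      xSemiP d s p D (fun x => ψ x • u x) ^ (1 / p) ≤ ENNReal.ofReal c * xNorm d s p D u := by
  obtain ⟨C, hC⟩ := Metric.isBounded_iff.1 hDb
  have hDr : ∀ x ∈ D, ∀ y ∈ D, ‖x - y‖ < C + 1 := fun x hx y hy =>
    (dist_eq_norm x y ▸ hC hx hy).trans_lt (lt_add_one C)
  set I := ∫⁻ z in ball (0 : Euc d) (C + 1), ‖z‖ₑ ^ p / ‖z‖ₑ ^ ((d : ℝ) + s * p)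
  have hI : I ≠ ∞ := by
    refine ((lintegral_mono fun z => ENNReal.rpow_div_rpow_le_rpow_sub enorm_ne_top
      (by linarith) _).trans_lt (lintegral_ball_enorm_rpow_lt_top (by simp; omega) ?_ _)).ne
    simp only [finrank_euclideanSpace_fin]
    nlinarith
  obtain ⟨c, hc, hcC⟩ := ENNReal.exists_pos_le_ofReal_rpow
    (C := 2 ^ (p - 1) * (ENNReal.ofReal M ^ p + (K : ℝ≥0∞) ^ p * I)) (by finiteness)
    (by linarith : 0 < p)
  refine ⟨c, hc, fun ψ u hψ hM hu => ?_⟩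
  calc xSemiP d s p D (fun x => ψ x • u x) ^ (1 / p)
      ≤ (ENNReal.ofReal c ^ p * (lpIntP d p D u + xSemiP d s p D u)) ^ (1 / p) := by
        gcongr
        exact (xSemiP_smul_le_mul_add hp.le hD.measurableSet hDr hψ hM hu).trans (by gcongr)
    _ = ENNReal.ofReal c * xNorm d s p D u := by
        rw [ENNReal.mul_rpow_of_nonneg _ _ (by positivity), ← ENNReal.rpow_mul,
          mul_one_div_cancel (by linarith), ENNReal.rpow_one, xNorm]

theorem stmt8 (d : ℕ) (hd : 1 < d) (p s : ℝ) (hp : 1 < p) (hs0 : 0 < s) (hs1 : s < 1)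
    (D : Set (Euc d)) (hD : IsOpen D) (hDb : Bornology.IsBounded D) (M : ℝ) (K : ℝ≥0) :
    ∃ c : ℝ, 0 < c ∧ ∀ (ψ : Euc d → ℝ) (u : Euc d → Euc d),
      LipschitzOnWith K ψ D → (∀ x ∈ D, |ψ x| ≤ M) → Measurable u →
      xSemiP d s p D (fun x => ψ x • u x) ^ (1 / p) ≤ ENNReal.ofReal c * xNorm d s p D u :=
  stmt8_general d hd p s hp hs1 D hD hDb M K
end
end

section
/- Let d > 1, p ∈ (1,∞), s ∈ (0,1), δ > 0. Let B, U ⊆ ℝ^d be open sets with U ∩ B_δ ≠ ∅ and U \ B ≠ ∅, where B_δ = {x ∈ B : dist(x, ∂B) > δ}. Let u be a vector field on U ∩ B with ‖u‖_{X^{s,p}(U∩B)} < ∞ whose support is contained in the closure of U ∩ B_δ, and define ũ = u on U ∩ B and ũ = 0 on U \ B. Then there is a constant c, depending only on d, p, s, δ, such that ‖ũ‖_{X^{s,p}(U)} ≤ c ‖u‖_{X^{s,p}(U∩B)}. -/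
open MeasureTheory ENNReal NNReal RealInnerProductSpace Filter

noncomputable section

/-! Extending `u` by zero leaves the `L^p` part and the part of the seminorm over `(U ∩ B)²`
unchanged and kills the part over `(U \ B)²`. For the cross terms, `u x ≠ 0` forces `x` into the
closure of `B_δ`, hence `|x - y| ≥ δ` for every `y ∉ B`. Bounding the projected difference quotient
by `|u x|` then gives `∫_{U \ B} … dy ≤ |u x|^p ∫_{|z| ≥ δ} |z|^{-(d+sp)} dz`, and this tail
integral is finite because `d + sp > d`. -/
lemma Real.rpow_neg_le_mul_one_add_rpow_neg {δ t r : ℝ} (hδ : 0 < δ) (ht : δ ≤ t) (hr : 0 ≤ r) :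
    t ^ (-r) ≤ (1 + δ⁻¹) ^ r * (1 + t) ^ (-r) := by
  have ht0 : 0 < t := hδ.trans_le ht
  have hle : 1 + t ≤ (1 + δ⁻¹) * t := by
    have : 1 ≤ δ⁻¹ * t := by rw [inv_mul_eq_div, one_le_div hδ]; exact ht
    linarith
  calc t ^ (-r) = (1 + δ⁻¹) ^ r * ((1 + δ⁻¹) * t) ^ (-r) := by
        rw [Real.mul_rpow (by positivity) ht0.le, ← mul_assoc, ← Real.rpow_add (by positivity),
          add_neg_cancel, Real.rpow_zero, one_mul]
    _ ≤ (1 + δ⁻¹) ^ r * (1 + t) ^ (-r) := by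
        gcongr ?_ * ?_
        exact Real.rpow_le_rpow_of_nonpos (by positivity) hle (neg_nonpos.mpr hr)

section TailIntegral

variable {E : Type*} [NormedAddCommGroup E] [NormedSpace ℝ E] [FiniteDimensional ℝ E]
  [MeasurableSpace E] [BorelSpace E] (μ : Measure E) [μ.IsAddHaarMeasure]

lemma setLIntegral_nnnorm_rpow_neg_lt_top {r δ : ℝ} (hr : (Module.finrank ℝ E : ℝ) < r)
    (hδ : 0 < δ) : ∫⁻ z in {z : E | δ ≤ ‖z‖}, (‖z‖₊ : ℝ≥0∞) ^ (-r) ∂μ < ⊤ := by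
  have hr0 : 0 ≤ r := (Nat.cast_nonneg _).trans hr.le
  have hbound : ∀ z ∈ {z : E | δ ≤ ‖z‖}, (‖z‖₊ : ℝ≥0∞) ^ (-r)
      ≤ ENNReal.ofReal ((1 + δ⁻¹) ^ r) * ENNReal.ofReal ((1 + ‖z‖) ^ (-r)) := by
    intro z hz
    rw [← ENNReal.ofReal_mul (by positivity), ← enorm_eq_nnnorm, ← ofReal_norm,
      ENNReal.ofReal_rpow_of_pos (hδ.trans_le hz)]
    exact ENNReal.ofReal_le_ofReal (Real.rpow_neg_le_mul_one_add_rpow_neg hδ hz hr0)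
  calc ∫⁻ z in {z : E | δ ≤ ‖z‖}, (‖z‖₊ : ℝ≥0∞) ^ (-r) ∂μ
      ≤ ∫⁻ z in {z : E | δ ≤ ‖z‖},
          ENNReal.ofReal ((1 + δ⁻¹) ^ r) * ENNReal.ofReal ((1 + ‖z‖) ^ (-r)) ∂μ :=
        setLIntegral_mono' (measurableSet_le measurable_const measurable_norm) hbound
    _ ≤ ∫⁻ z, ENNReal.ofReal ((1 + δ⁻¹) ^ r) * ENNReal.ofReal ((1 + ‖z‖) ^ (-r)) ∂μ :=
        setLIntegral_le_lintegral _ _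
    _ < ⊤ := by
        rw [lintegral_const_mul' _ _ ENNReal.ofReal_ne_top]
        exact ENNReal.mul_lt_top ENNReal.ofReal_lt_top (finite_integral_one_add_norm hr)

end TailIntegral

lemma setLIntegral_nnnorm_sub_rpow_neg_le {E : Type*} [NormedAddCommGroup E] [MeasurableSpace E]
    [BorelSpace E] (μ : Measure E) [μ.IsAddLeftInvariant] [μ.IsNegInvariant] {r δ : ℝ} {x : E}
    {S : Set E} (hS : ∀ y ∈ S, δ ≤ ‖x - y‖) :
    ∫⁻ y in S, (‖x - y‖₊ : ℝ≥0∞) ^ (-r) ∂μ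
      ≤ ∫⁻ z in {z : E | δ ≤ ‖z‖}, (‖z‖₊ : ℝ≥0∞) ^ (-r) ∂μ :=
  calc ∫⁻ y in S, (‖x - y‖₊ : ℝ≥0∞) ^ (-r) ∂μ
      ≤ ∫⁻ y in (x - ·) ⁻¹' {z : E | δ ≤ ‖z‖}, (‖x - y‖₊ : ℝ≥0∞) ^ (-r) ∂μ :=
        lintegral_mono_set hS
    _ = ∫⁻ z in {z : E | δ ≤ ‖z‖}, (‖z‖₊ : ℝ≥0∞) ^ (-r) ∂μ :=
        (Measure.measurePreserving_sub_left μ x).setLIntegral_comp_preimage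
          (measurableSet_le measurable_const measurable_norm)
          (measurable_nnnorm.coe_nnreal_ennreal.pow_const _)

lemma le_dist_of_mem_closure_innerSet {d : ℕ} {δ : ℝ} {B : Set (Euc d)} {x y : Euc d}
    (hxB : x ∈ B) (hx : x ∈ closure (innerSet d δ B)) (hy : y ∉ B) : δ ≤ dist x y := by
  have hxδ : δ ≤ Metric.infDist x (frontier B) :=
    closure_minimal (fun z hz => hz.2.le)
      (isClosed_le continuous_const (Metric.continuous_infDist_pt _)) hx
  obtain ⟨w, hw, hxw⟩ :=
    exists_mem_frontier_infDist_compl_eq_dist hxB fun hB => hy (hB ▸ Set.mem_univ y)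
  calc δ ≤ Metric.infDist x (frontier B) := hxδ
    _ ≤ dist x w := Metric.infDist_le_dist_of_mem hw
    _ = Metric.infDist x Bᶜ := hxw.symm
    _ ≤ dist x y := Metric.infDist_le_dist_of_mem hy

lemma setLIntegral_setLIntegral_union_of_symm {α : Type*} [MeasurableSpace α] {μ : Measure α}
    [SFinite μ] {F : α → α → ℝ≥0∞} (hF : Measurable (Function.uncurry F))
    (hsymm : ∀ x y, F x y = F y x) {V W : Set α} (hW : MeasurableSet W) (hVW : Disjoint V W) :
    ∫⁻ x in V ∪ W, ∫⁻ y in V ∪ W, F x y ∂μ ∂μ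
      = ∫⁻ x in V, ∫⁻ y in V, F x y ∂μ ∂μ + 2 * (∫⁻ x in V, ∫⁻ y in W, F x y ∂μ ∂μ)
        + ∫⁻ x in W, ∫⁻ y in W, F x y ∂μ ∂μ := by
  have hsplit : ∀ x, ∫⁻ y in V ∪ W, F x y ∂μ = ∫⁻ y in V, F x y ∂μ + ∫⁻ y in W, F x y ∂μ :=
    fun x => lintegral_union hW hVW
  have hswap : ∫⁻ x in W, ∫⁻ y in V, F x y ∂μ ∂μ = ∫⁻ x in V, ∫⁻ y in W, F x y ∂μ ∂μ := by
    rw [lintegral_congr fun x => lintegral_congr fun y => hsymm x y]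
    exact lintegral_lintegral_swap (hF.comp measurable_swap).aemeasurable
  have hmeas : ∀ S : Set α, Measurable fun x => ∫⁻ y in S, F x y ∂μ :=
    fun S => hF.lintegral_prod_right'
  rw [lintegral_union hW hVW, lintegral_congr hsplit, lintegral_congr hsplit,
    lintegral_add_left (hmeas V), lintegral_add_left (hmeas V), hswap]
  ring

def projKernel (d : ℕ) (s p : ℝ) (w : Euc d → Euc d) (x y : Euc d) : ℝ≥0∞ :=
  ENNReal.ofReal (|(inner ℝ (w x - w y) (x - y) : ℝ)| / ‖x - y‖) ^ p
    / (‖x - y‖₊ : ℝ≥0∞) ^ ((d : ℝ) + s * p)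

namespace projKernel

variable {d : ℕ} {s p : ℝ} {w : Euc d → Euc d}

lemma xSemiP_eq (D : Set (Euc d)) :
    xSemiP d s p D w = ∫⁻ x in D, ∫⁻ y in D, projKernel d s p w x y := rfl

lemma measurable_uncurry (hw : Measurable w) :
    Measurable (Function.uncurry (projKernel d s p w)) := by
  unfold projKernel
  fun_prop

lemma comm (x y : Euc d) : projKernel d s p w x y = projKernel d s p w y x := by
  unfold projKernel
  rw [← neg_sub (w y), ← neg_sub y, inner_neg_neg, norm_neg, nnnorm_neg]

lemma le_nnnorm_sub_rpow (hp : 0 ≤ p) (x y : Euc d) :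
    projKernel d s p w x y
      ≤ (‖w x - w y‖₊ : ℝ≥0∞) ^ p * (‖x - y‖₊ : ℝ≥0∞) ^ (-((d : ℝ) + s * p)) := by
  have hproj : |(inner ℝ (w x - w y) (x - y) : ℝ)| / ‖x - y‖ ≤ ‖w x - w y‖ := by
    rcases eq_or_ne (x - y) 0 with h | h
    · simp [h]
    · rw [div_le_iff₀ (norm_pos_iff.mpr h)]
      exact abs_real_inner_le_norm _ _
  rw [projKernel, ENNReal.rpow_neg, ← div_eq_mul_inv]
  gcongr
  rw [← enorm_eq_nnnorm, ← ofReal_norm]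
  exact ENNReal.ofReal_le_ofReal hproj

lemma eq_zero (hp : 0 < p) {x y : Euc d} (hx : w x = 0) (hy : w y = 0) :
    projKernel d s p w x y = 0 := by
  simp [projKernel, hx, hy, ENNReal.zero_rpow_of_pos hp]

lemma setLIntegral_setLIntegral_le_mul_lpIntP (hp : 0 < p) {δ : ℝ} {V W : Set (Euc d)}
    (hV : MeasurableSet V) (hW : MeasurableSet W) (hw : Measurable w) (hwW : ∀ y ∈ W, w y = 0)
    (hsep : ∀ x ∈ V, w x ≠ 0 → ∀ y ∈ W, δ ≤ dist x y) :
    ∫⁻ x in V, ∫⁻ y in W, projKernel d s p w x y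
      ≤ (∫⁻ z in {z : Euc d | δ ≤ ‖z‖}, (‖z‖₊ : ℝ≥0∞) ^ (-((d : ℝ) + s * p)))
        * lpIntP d p V w := by
  set K := ∫⁻ z in {z : Euc d | δ ≤ ‖z‖}, (‖z‖₊ : ℝ≥0∞) ^ (-((d : ℝ) + s * p))
  have hinner : ∀ x ∈ V, ∫⁻ y in W, projKernel d s p w x y ≤ K * (‖w x‖₊ : ℝ≥0∞) ^ p := by
    intro x hx
    by_cases hx0 : w x = 0
    · rw [setLIntegral_congr_fun hW fun y hy => eq_zero hp hx0 (hwW y hy), lintegral_zero]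
      exact zero_le
    calc ∫⁻ y in W, projKernel d s p w x y
        ≤ ∫⁻ y in W, (‖w x‖₊ : ℝ≥0∞) ^ p * (‖x - y‖₊ : ℝ≥0∞) ^ (-((d : ℝ) + s * p)) :=
          setLIntegral_mono' hW fun y hy =>
            (le_nnnorm_sub_rpow hp.le x y).trans_eq (by rw [hwW y hy, sub_zero])
      _ = (‖w x‖₊ : ℝ≥0∞) ^ p * ∫⁻ y in W, (‖x - y‖₊ : ℝ≥0∞) ^ (-((d : ℝ) + s * p)) :=
          lintegral_const_mul _
            ((measurable_const.sub measurable_id).nnnorm.coe_nnreal_ennreal.pow_const _)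
      _ ≤ (‖w x‖₊ : ℝ≥0∞) ^ p * K := by
          refine mul_le_mul_right (setLIntegral_nnnorm_sub_rpow_neg_le volume fun y hy => ?_) _
          rw [← dist_eq_norm]
          exact hsep x hx hx0 y hy
      _ = K * (‖w x‖₊ : ℝ≥0∞) ^ p := mul_comm _ _
  calc ∫⁻ x in V, ∫⁻ y in W, projKernel d s p w x y
      ≤ ∫⁻ x in V, K * (‖w x‖₊ : ℝ≥0∞) ^ p := setLIntegral_mono' hV hinner
    _ = K * lpIntP d p V w :=
        lintegral_const_mul _ ((hw.nnnorm.coe_nnreal_ennreal).pow_const _)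

end projKernel

section ExtensionByZero

variable {d : ℕ} {s p δ : ℝ} {B U : Set (Euc d)} {u : Euc d → Euc d}

lemma lpIntP_congr {D : Set (Euc d)} {u v : Euc d → Euc d} (hD : MeasurableSet D)
    (h : Set.EqOn u v D) : lpIntP d p D u = lpIntP d p D v :=
  setLIntegral_congr_fun hD fun x hx => by rw [h hx]

lemma xSemiP_congr {D : Set (Euc d)} {u v : Euc d → Euc d} (hD : MeasurableSet D)
    (h : Set.EqOn u v D) : xSemiP d s p D u = xSemiP d s p D v :=
  setLIntegral_congr_fun hD fun x hx => setLIntegral_congr_fun hD fun y hy => by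
    rw [h hx, h hy]

lemma xSemiP_eq_zero (hp : 0 < p) {D : Set (Euc d)} {w : Euc d → Euc d} (hD : MeasurableSet D)
    (hw : ∀ x ∈ D, w x = 0) : xSemiP d s p D w = 0 := by
  rw [projKernel.xSemiP_eq, setLIntegral_congr_fun hD fun x hx =>
    (setLIntegral_congr_fun hD fun y hy => projKernel.eq_zero hp (hw x hx) (hw y hy)).trans
      lintegral_zero, lintegral_zero]

lemma lpIntP_indicator (hp : 0 < p) (hB : MeasurableSet B) (U : Set (Euc d))
    (u : Euc d → Euc d) : lpIntP d p U (B.indicator u) = lpIntP d p (U ∩ B) u := by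
  have hind : (fun x => (‖B.indicator u x‖₊ : ℝ≥0∞) ^ p)
      = B.indicator fun x => (‖u x‖₊ : ℝ≥0∞) ^ p := by
    ext x
    by_cases hx : x ∈ B <;> simp [hx, ENNReal.zero_rpow_of_pos hp]
  rw [lpIntP, hind, setLIntegral_indicator hB, Set.inter_comm, lpIntP]

lemma xSemiP_indicator_le (hp : 0 < p) (hU : MeasurableSet U) (hB : MeasurableSet B)
    (hu : Measurable u) (hsep : ∀ x ∈ U ∩ B, u x ≠ 0 → ∀ y ∈ U \ B, δ ≤ dist x y) :
    xSemiP d s p U (B.indicator u)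
      ≤ xSemiP d s p (U ∩ B) u
        + 2 * (∫⁻ z in {z : Euc d | δ ≤ ‖z‖}, (‖z‖₊ : ℝ≥0∞) ^ (-((d : ℝ) + s * p)))
          * lpIntP d p (U ∩ B) u := by
  have hUB := hU.inter hB
  have hUdB := hU.diff hB
  have hon : Set.EqOn (B.indicator u) u (U ∩ B) := fun x hx => Set.indicator_of_mem hx.2 u
  have hoff : ∀ y ∈ U \ B, B.indicator u y = 0 := fun y hy => Set.indicator_of_notMem hy.2 u
  have hcross := projKernel.setLIntegral_setLIntegral_le_mul_lpIntP (s := s) hp hUB hUdB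
    (hu.indicator hB) hoff fun x hx hx0 => hsep x hx (hon hx ▸ hx0)
  calc xSemiP d s p U (B.indicator u)
      = xSemiP d s p (U ∩ B) (B.indicator u)
          + 2 * (∫⁻ x in U ∩ B, ∫⁻ y in U \ B, projKernel d s p (B.indicator u) x y)
          + xSemiP d s p (U \ B) (B.indicator u) := by
        conv_lhs => rw [projKernel.xSemiP_eq, ← Set.inter_union_sdiff U B]
        exact setLIntegral_setLIntegral_union_of_symm (μ := volume)
          (projKernel.measurable_uncurry (hu.indicator hB)) projKernel.comm hUdB
          Set.disjoint_sdiff_inter.symm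
    _ ≤ _ := by
        rw [xSemiP_congr hUB hon, xSemiP_eq_zero hp hUdB hoff, add_zero, mul_assoc,
          ← lpIntP_congr hUB hon]
        gcongr

lemma ENNReal.rpow_le_ofReal_toReal_rpow_mul_rpow {a b M : ℝ≥0∞} {q : ℝ} (hM : M ≠ ⊤)
    (hq : 0 ≤ q) (h : a ≤ M * b) : a ^ q ≤ ENNReal.ofReal (M.toReal ^ q) * b ^ q := by
  rw [← ENNReal.ofReal_rpow_of_nonneg ENNReal.toReal_nonneg hq, ENNReal.ofReal_toReal hM,
    ← ENNReal.mul_rpow_of_nonneg _ _ hq]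
  exact ENNReal.rpow_le_rpow h hq

def extensionConst (d : ℕ) (s p δ : ℝ) : ℝ :=
  ((1 + 2 * ∫⁻ z in {z : Euc d | δ ≤ ‖z‖}, (‖z‖₊ : ℝ≥0∞) ^ (-((d : ℝ) + s * p))).toReal)
    ^ (1 / p)

lemma extensionConst_pos (hp : 0 < p) (hs : 0 < s) (hδ : 0 < δ) :
    0 < extensionConst d s p δ := by
  refine Real.rpow_pos_of_pos (ENNReal.toReal_pos (by positivity) ?_) _
  exact ENNReal.add_ne_top.mpr ⟨ENNReal.one_ne_top, ENNReal.mul_ne_top ENNReal.ofNat_ne_top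
    (setLIntegral_nnnorm_rpow_neg_lt_top volume (by simp [hp, hs]) hδ).ne⟩

lemma xNorm_indicator_le (hp : 0 < p) (hs : 0 < s) (hδ : 0 < δ) (hU : MeasurableSet U)
    (hB : MeasurableSet B) (hu : Measurable u)
    (hsep : ∀ x ∈ U ∩ B, u x ≠ 0 → ∀ y ∈ U \ B, δ ≤ dist x y) :
    xNorm d s p U (B.indicator u)
      ≤ ENNReal.ofReal (extensionConst d s p δ) * xNorm d s p (U ∩ B) u := by
  set K := ∫⁻ z in {z : Euc d | δ ≤ ‖z‖}, (‖z‖₊ : ℝ≥0∞) ^ (-((d : ℝ) + s * p))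
  have hK : K ≠ ⊤ := (setLIntegral_nnnorm_rpow_neg_lt_top volume (by simp [hp, hs]) hδ).ne
  set A := lpIntP d p (U ∩ B) u
  set X := xSemiP d s p (U ∩ B) u
  refine ENNReal.rpow_le_ofReal_toReal_rpow_mul_rpow (by finiteness) (by positivity) ?_
  calc lpIntP d p U (B.indicator u) + xSemiP d s p U (B.indicator u)
      ≤ A + (X + 2 * K * A) :=
        add_le_add (lpIntP_indicator hp hB U u).le (xSemiP_indicator_le hp hU hB hu hsep)
    _ ≤ (A + X) + 2 * K * (A + X) := by
        rw [← add_assoc]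
        gcongr
        exact le_self_add
    _ = (1 + 2 * K) * (A + X) := by ring

end ExtensionByZero

theorem stmt10_general (d : ℕ) (p s δ : ℝ) (hp : 1 < p) (hs0 : 0 < s) (hδ : 0 < δ) :
    ∃ c : ℝ, 0 < c ∧ ∀ (B U : Set (Euc d)), IsOpen B → IsOpen U →
      (U ∩ innerSet d δ B).Nonempty → (U \ B).Nonempty →
      ∀ u : Euc d → Euc d, Measurable u →
        xNorm d s p (U ∩ B) u ≠ ⊤ →
        (∀ x ∈ (U ∩ B) \ closure (U ∩ innerSet d δ B), u x = 0) →
        xNorm d s p U (Set.indicator B u) ≤ ENNReal.ofReal c * xNorm d s p (U ∩ B) u := by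
  have hp0 : 0 < p := one_pos.trans hp
  refine ⟨extensionConst d s p δ, extensionConst_pos hp0 hs0 hδ, ?_⟩
  intro B U hB hU _ _ u hu _ hsupp
  refine xNorm_indicator_le hp0 hs0 hδ hU.measurableSet hB.measurableSet hu
    fun x hx hx0 y hy => le_dist_of_mem_closure_innerSet hx.2 ?_ hy.2
  have hxδ : x ∈ closure (U ∩ innerSet d δ B) := by_contra fun h => hx0 (hsupp x ⟨hx, h⟩)
  exact closure_mono Set.inter_subset_right hxδ

theorem stmt10 (d : ℕ) (hd : 1 < d) (p s δ : ℝ) (hp : 1 < p) (hs0 : 0 < s) (hs1 : s < 1)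
    (hδ : 0 < δ) :
    ∃ c : ℝ, 0 < c ∧ ∀ (B U : Set (Euc d)), IsOpen B → IsOpen U →
      (U ∩ innerSet d δ B).Nonempty → (U \ B).Nonempty →
      ∀ u : Euc d → Euc d, Measurable u →
        xNorm d s p (U ∩ B) u ≠ ⊤ →
        (∀ x ∈ (U ∩ B) \ closure (U ∩ innerSet d δ B), u x = 0) →
        xNorm d s p U (Set.indicator B u) ≤ ENNReal.ofReal c * xNorm d s p (U ∩ B) u :=
  stmt10_general d p s δ hp hs0 hδ
end
end

section
/- Let d > 1, p ∈ (1,∞), s ∈ (0,1), let f: ℝ^{d−1} → ℝ be Lipschitz with constant L, let D be the epigraph of f, and set C(L) = √(1 + L(L+1)). For a vector field u on D define v on the half-space ℝ^d_+ by v(w', w_d) = u(w', w_d + f(w')). Then C(L)^{−(3d+sp)} |v|_{W^{s,p}(ℝ^d_+)}^p ≤ |u|_{W^{s,p}(D)}^p ≤ C(L)^{3d+sp} |v|_{W^{s,p}(ℝ^d_+)}^p. -/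
open MeasureTheory ENNReal NNReal RealInnerProductSpace Filter

noncomputable section

/-! The shear `T = shiftGraph f` preserves Lebesgue measure (Fubini plus translation invariance
in the last coordinate) and maps `ℝ^d_+` onto the epigraph, so it transports the Gagliardo
double integral over `D` to one over `ℝ^d_+` with the kernel evaluated at `|T w - T v|`
instead of `|w - v|`. Since `f` is `L`-Lipschitz, `T` and `T⁻¹` (the shear by `-f`) are both
`C(L)`-Lipschitz, so the two kernels differ by at most the factor `C(L)^(d+sp)`, and
`C(L) ≥ 1` lets us enlarge the exponent to `3d + sp`. -/

theorem ENNReal.div_rpow_le_mul_div_rpow {a b K : ℝ≥0∞} (N : ℝ≥0∞) {α : ℝ} (hα : 0 ≤ α)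
    (hK0 : K ≠ 0) (hK : K ≠ ⊤) (h : a ≤ K * b) : N / b ^ α ≤ K ^ α * (N / a ^ α) := by
  have hKα0 : K ^ α ≠ 0 := (ENNReal.rpow_pos (pos_iff_ne_zero.2 hK0) hK).ne'
  have hKα : K ^ α ≠ ⊤ := ENNReal.rpow_ne_top_of_nonneg hα hK
  calc N / b ^ α = K ^ α * N / (K ^ α * b ^ α) := (ENNReal.mul_div_mul_left _ _ hKα0 hKα).symm
    _ ≤ K ^ α * N / a ^ α := by
      gcongr
      exact (ENNReal.rpow_le_rpow h hα).trans_eq (ENNReal.mul_rpow_of_nonneg _ _ hα)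
    _ = K ^ α * (N / a ^ α) := mul_div_assoc _ _ _

theorem measurePreserving_shear {G β : Type*} [AddGroup G] [MeasurableSpace G]
    [MeasurableAdd₂ G] [MeasurableSpace β] (ν : Measure G) [ν.IsAddRightInvariant] [SFinite ν]
    (μ : Measure β) [SFinite μ] {g : β → G} (hg : Measurable g) :
    MeasurePreserving (fun z : G × β => (z.1 + g z.2, z.2)) (ν.prod μ) (ν.prod μ) := by
  have skew : MeasurePreserving (fun z : β × G => (z.1, z.2 + g z.1)) (μ.prod ν) (μ.prod ν) :=
    (MeasurePreserving.id μ).skew_product (measurable_snd.add (hg.comp measurable_fst))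
      (.of_forall fun y => map_add_right_eq_self ν (g y))
  exact Measure.measurePreserving_swap.comp (skew.comp Measure.measurePreserving_swap)

theorem const_mul_lintegral_lintegral_le {α : Type*} [MeasurableSpace α] {μ : Measure α}
    {H : Set α} {c : ℝ≥0∞} {F G : α → α → ℝ≥0∞} (h : ∀ x y, c * F x y ≤ G x y) :
    c * ∫⁻ x in H, ∫⁻ y in H, F x y ∂μ ∂μ ≤ ∫⁻ x in H, ∫⁻ y in H, G x y ∂μ ∂μ :=
  (lintegral_const_mul_le _ _).trans <| lintegral_mono fun x =>
    (lintegral_const_mul_le _ _).trans <| lintegral_mono fun y => h x y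

section Gagliardo

variable {d : ℕ} {s p : ℝ} {D H : Set (Euc d)} {u T : Euc d → Euc d}

theorem wSemiP_eq_of_measurePreserving (hT : MeasurePreserving T) (hTe : MeasurableEmbedding T)
    (hDH : T ⁻¹' D = H) :
    wSemiP d s p D u = ∫⁻ x in H, ∫⁻ y in H,
      (‖u (T x) - u (T y)‖₊ : ℝ≥0∞) ^ p / (‖T x - T y‖₊ : ℝ≥0∞) ^ ((d : ℝ) + s * p) := by
  rw [wSemiP, ← hDH, ← hT.setLIntegral_comp_preimage_emb hTe]
  refine lintegral_congr fun x => ?_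
  exact (hT.setLIntegral_comp_preimage_emb hTe _ D).symm

variable {K : ℝ≥0}

theorem wSemiP_le_of_antilipschitzWith (hT : MeasurePreserving T) (hTe : MeasurableEmbedding T)
    (hDH : T ⁻¹' D = H) (hK : AntilipschitzWith K T) (hK0 : K ≠ 0) (hα : 0 ≤ (d : ℝ) + s * p) :
    wSemiP d s p D u ≤ (K : ℝ≥0∞) ^ ((d : ℝ) + s * p) * wSemiP d s p H (u ∘ T) := by
  have hKα0 : (K : ℝ≥0∞) ^ ((d : ℝ) + s * p) ≠ 0 := by simp [hK0]
  rw [← ENNReal.inv_mul_le_iff hKα0 (by simp [hα]), wSemiP_eq_of_measurePreserving hT hTe hDH]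
  refine const_mul_lintegral_lintegral_le fun x y => ?_
  rw [ENNReal.inv_mul_le_iff hKα0 (by simp [hα])]
  refine ENNReal.div_rpow_le_mul_div_rpow _ hα (by simpa using hK0) ENNReal.coe_ne_top ?_
  simpa only [edist_eq_enorm_sub, enorm_eq_nnnorm] using hK x y

theorem inv_rpow_mul_wSemiP_le_of_lipschitzWith (hT : MeasurePreserving T)
    (hTe : MeasurableEmbedding T) (hDH : T ⁻¹' D = H) (hK : LipschitzWith K T) (hK0 : K ≠ 0)
    (hα : 0 ≤ (d : ℝ) + s * p) :
    ((K : ℝ≥0∞) ^ ((d : ℝ) + s * p))⁻¹ * wSemiP d s p H (u ∘ T) ≤ wSemiP d s p D u := by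
  rw [wSemiP_eq_of_measurePreserving hT hTe hDH]
  refine const_mul_lintegral_lintegral_le fun x y => ?_
  rw [ENNReal.inv_mul_le_iff (by simp [hK0]) (by simp [hα])]
  refine ENNReal.div_rpow_le_mul_div_rpow _ hα (by simpa using hK0) ENNReal.coe_ne_top ?_
  simpa only [edist_eq_enorm_sub, enorm_eq_nnnorm] using hK x y

end Gagliardo

theorem one_le_CL {L : ℝ} (hL : 0 ≤ L) : 1 ≤ CL L :=
  Real.one_le_sqrt.2 (by nlinarith)

theorem sq_CL {L : ℝ} (hL : 0 ≤ L) : CL L ^ 2 = 1 + L * (L + 1) :=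
  Real.sq_sqrt (by nlinarith)

theorem sq_add_sq_add_le {L X t δ : ℝ} (hL : 0 ≤ L) (hδ : |δ| ≤ L * X) :
    X ^ 2 + (t + δ) ^ 2 ≤ (1 + L * (L + 1)) * (X ^ 2 + t ^ 2) := by
  have htδ : t * δ ≤ L * X * |t| := by
    calc t * δ ≤ |t| * |δ| := by rw [← abs_mul]; exact le_abs_self _
      _ ≤ |t| * (L * X) := by gcongr
      _ = L * X * |t| := mul_comm _ _
  have hXt : L * (2 * X * |t|) ≤ L * (X ^ 2 + t ^ 2) := by
    gcongr
    nlinarith [sq_nonneg (X - |t|), sq_abs t]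
  have hδ2 : δ ^ 2 ≤ (L * X) ^ 2 := by rw [← sq_abs]; gcongr
  nlinarith [mul_nonneg (mul_nonneg hL hL) (sq_nonneg t)]

section GraphShift

variable {n : ℕ} (f : Euc n → ℝ)

theorem proj'_sub (x y : Euc (n + 1)) :
    proj' (n + 1) (x - y) = proj' (n + 1) x - proj' (n + 1) y :=
  rfl

theorem norm_sq_eq_norm_proj'_sq_add (a : Euc (n + 1)) :
    ‖a‖ ^ 2 = ‖proj' (n + 1) a‖ ^ 2 + a (Fin.last n) ^ 2 := by
  simp only [EuclideanSpace.norm_sq_eq, Fin.sum_univ_castSucc, proj', Real.norm_eq_abs, sq_abs]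
  rfl

theorem proj'_shiftGraph (w : Euc (n + 1)) :
    proj' (n + 1) (shiftGraph (n + 1) f w) = proj' (n + 1) w := by
  ext i
  simp only [proj', shiftGraph]
  rw [if_neg (by simpa using i.isLt.ne)]

theorem shiftGraph_apply_last (w : Euc (n + 1)) :
    shiftGraph (n + 1) f w (Fin.last n) = w (Fin.last n) + f (proj' (n + 1) w) := by
  simp [shiftGraph]

theorem leftInverse_shiftGraph_neg :
    Function.LeftInverse (shiftGraph (n + 1) (-f)) (shiftGraph (n + 1) f) := fun w => by
  ext i
  induction i using Fin.lastCases with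
  | last => simp [shiftGraph_apply_last, proj'_shiftGraph]
  | cast j => simp [shiftGraph, j.isLt.ne]

theorem rightInverse_shiftGraph_neg :
    Function.RightInverse (shiftGraph (n + 1) (-f)) (shiftGraph (n + 1) f) :=
  fun w => by simpa using leftInverse_shiftGraph_neg (-f) w

theorem shiftGraph_preimage_epigraph (hd : 0 < n + 1) :
    shiftGraph (n + 1) f ⁻¹' epigraph (n + 1) hd f = halfSpace (n + 1) hd := by
  ext w
  simp only [Set.mem_preimage, epigraph, halfSpace, Set.mem_ofPred_eq, proj'_shiftGraph]
  change _ < shiftGraph (n + 1) f w (Fin.last n) ↔ 0 < w (Fin.last n)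
  rw [shiftGraph_apply_last]
  constructor <;> intro h <;> linarith

theorem shiftGraph_eq_comp : shiftGraph (n + 1) f =
    WithLp.toLp 2 ∘ (MeasurableEquiv.piFinSuccAbove (fun _ => ℝ) (Fin.last n)).symm ∘
      (fun z : ℝ × (Fin n → ℝ) => (z.1 + f (WithLp.toLp 2 z.2), z.2)) ∘
      MeasurableEquiv.piFinSuccAbove (fun _ => ℝ) (Fin.last n) ∘ WithLp.ofLp := by
  funext w
  ext i
  induction i using Fin.lastCases with
  | last => simp [shiftGraph, proj']; rfl
  | cast j => simp [shiftGraph, j.isLt.ne]; rfl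

theorem measurePreserving_shiftGraph (hf : Measurable f) :
    MeasurePreserving (shiftGraph (n + 1) f) := by
  have hpi := volume_preserving_piFinSuccAbove (fun _ : Fin (n + 1) => ℝ) (Fin.last n)
  rw [shiftGraph_eq_comp]
  exact (PiLp.volume_preserving_toLp _).comp <| hpi.symm.comp <|
    (measurePreserving_shear volume volume (hf.comp (by fun_prop))).comp <|
      hpi.comp (PiLp.volume_preserving_ofLp _)

variable {f} {L : ℝ}

theorem lipschitzWith_shiftGraph (hL : 0 ≤ L) (hf : LipschitzWith (Real.toNNReal L) f) :
    LipschitzWith (Real.toNNReal (CL L)) (shiftGraph (n + 1) f) := by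
  refine LipschitzWith.of_dist_le_mul fun w v => ?_
  rw [Real.coe_toNNReal _ (zero_le_one.trans (one_le_CL hL)), dist_eq_norm, dist_eq_norm]
  have hδ : |f (proj' (n + 1) w) - f (proj' (n + 1) v)| ≤ L * ‖proj' (n + 1) (w - v)‖ := by
    simpa [Real.coe_toNNReal L hL, dist_eq_norm, proj'_sub] using
      hf.dist_le_mul (proj' (n + 1) w) (proj' (n + 1) v)
  refine le_of_pow_le_pow_left₀ two_ne_zero
    (mul_nonneg (zero_le_one.trans (one_le_CL hL)) (norm_nonneg _)) ?_
  calc ‖shiftGraph (n + 1) f w - shiftGraph (n + 1) f v‖ ^ 2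
      = ‖proj' (n + 1) (w - v)‖ ^ 2
          + ((w - v) (Fin.last n) + (f (proj' (n + 1) w) - f (proj' (n + 1) v))) ^ 2 := by
        rw [norm_sq_eq_norm_proj'_sq_add, proj'_sub, proj'_shiftGraph, proj'_shiftGraph,
          ← proj'_sub]
        simp only [PiLp.sub_apply, shiftGraph_apply_last]
        ring
    _ ≤ (1 + L * (L + 1)) * (‖proj' (n + 1) (w - v)‖ ^ 2 + (w - v) (Fin.last n) ^ 2) :=
        sq_add_sq_add_le hL hδ
    _ = (CL L * ‖w - v‖) ^ 2 := by rw [mul_pow, sq_CL hL, norm_sq_eq_norm_proj'_sq_add]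

theorem antilipschitzWith_shiftGraph (hL : 0 ≤ L) (hf : LipschitzWith (Real.toNNReal L) f) :
    AntilipschitzWith (Real.toNNReal (CL L)) (shiftGraph (n + 1) f) :=
  (lipschitzWith_shiftGraph hL hf.neg).to_rightInverse (leftInverse_shiftGraph_neg f)

theorem measurableEmbedding_shiftGraph (hL : 0 ≤ L) (hf : LipschitzWith (Real.toNNReal L) f) :
    MeasurableEmbedding (shiftGraph (n + 1) f) :=
  .of_measurable_inverse (lipschitzWith_shiftGraph hL hf).continuous.measurable
    ((rightInverse_shiftGraph_neg f).surjective.range_eq ▸ MeasurableSet.univ)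
    (lipschitzWith_shiftGraph hL hf.neg).continuous.measurable (leftInverse_shiftGraph_neg f)

end GraphShift

theorem stmt15 (d : ℕ) (hd : 1 < d) (p s L : ℝ) (hp : 1 < p) (hs0 : 0 < s)
    (hL : 0 ≤ L) (f : Euc (d - 1) → ℝ) (hf : LipschitzWith (Real.toNNReal L) f)
    (u : Euc d → Euc d) :
    ENNReal.ofReal (CL L ^ (-(3 * (d : ℝ) + s * p)))
        * wSemiP d s p (halfSpace d (by omega)) (u ∘ shiftGraph d f)
      ≤ wSemiP d s p (epigraph d (by omega) f) u ∧
    wSemiP d s p (epigraph d (by omega) f) u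
      ≤ ENNReal.ofReal (CL L ^ (3 * (d : ℝ) + s * p))
        * wSemiP d s p (halfSpace d (by omega)) (u ∘ shiftGraph d f) := by
  obtain ⟨n, rfl⟩ : ∃ n, d = n + 1 := ⟨d - 1, by omega⟩
  have hC : 0 < CL L := zero_lt_one.trans_le (one_le_CL hL)
  have hK0 : Real.toNNReal (CL L) ≠ 0 := (Real.toNNReal_pos.2 hC).ne'
  have hα : 0 ≤ ((n + 1 : ℕ) : ℝ) + s * p := by positivity
  have hαβ : ((n + 1 : ℕ) : ℝ) + s * p ≤ 3 * ((n + 1 : ℕ) : ℝ) + s * p := by linarith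
  have hpow : ENNReal.ofReal (CL L) ^ (((n + 1 : ℕ) : ℝ) + s * p)
      ≤ ENNReal.ofReal (CL L) ^ (3 * ((n + 1 : ℕ) : ℝ) + s * p) :=
    ENNReal.rpow_le_rpow_of_exponent_le (ENNReal.one_le_ofReal.2 (one_le_CL hL)) hαβ
  have hT := measurePreserving_shiftGraph (n := n) f hf.continuous.measurable
  have hTe := measurableEmbedding_shiftGraph (n := n) hL hf
  have hDH := shiftGraph_preimage_epigraph (n := n) f (by omega)
  rw [← ENNReal.ofReal_rpow_of_pos hC, ← ENNReal.ofReal_rpow_of_pos hC, ENNReal.rpow_neg]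
  constructor
  · calc _ ≤ (ENNReal.ofReal (CL L) ^ (((n + 1 : ℕ) : ℝ) + s * p))⁻¹
          * wSemiP (n + 1) s p (halfSpace (n + 1) (by omega)) (u ∘ shiftGraph (n + 1) f) := by
          gcongr
      _ ≤ _ := inv_rpow_mul_wSemiP_le_of_lipschitzWith hT hTe hDH
          (lipschitzWith_shiftGraph hL hf) hK0 hα
  · calc _ ≤ ENNReal.ofReal (CL L) ^ (((n + 1 : ℕ) : ℝ) + s * p)
          * wSemiP (n + 1) s p (halfSpace (n + 1) (by omega)) (u ∘ shiftGraph (n + 1) f) :=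
          wSemiP_le_of_antilipschitzWith hT hTe hDH (antilipschitzWith_shiftGraph hL hf) hK0 hα
      _ ≤ _ := by gcongr
end
end
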